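/- arXiv:0805.3518 — 2 statements merged into one kernel-verified Lean document; each statement's English description precedes it below -/
import Mathlib

section
/- Given a SOLP collection {P_1,...,P_n}, let P_u = ∪_{1≤i≤n} Γ'(A(P̂_i)). Then SM(P_u) = B, where B = { ((F^1)_{P_1} ∪ (G^1)_{P_1}) ∪ ... ∪ ((F^n)_{P_n} ∪ (G^n)_{P_n}) : for every i, F^i ∈ AFP(P_i) and (G^i)_{P_i} = [F^i]_{P_i} ∖ (F^i)_{P_i} }. -/
namespace SOLP

/-- Literals: an atom or its negation-as-failure (NAF). -/
inductive Lit (α : Type) where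
  | pos (a : α)
  | neg (a : α)

/-- The atom of a literal. -/
def Lit.atom {α : Type} : Lit α → α
  | .pos a => a
  | .neg a => a

/-- Classical truth of a literal w.r.t. an interpretation. -/
def Lit.holds {α : Type} (I : Set α) : Lit α → Prop
  | .pos a => a ∈ I
  | .neg a => a ∉ I

/-- Renaming of literals. -/
def Lit.map {α β : Type} (f : α → β) : Lit α → Lit β
  | .pos a => .pos (f a)
  | .neg a => .neg (f a)

/-- Selection condition of a social condition: either a member selection `[P_k]`
naming one program, or a cardinal selection `[l,h]`. -/
inductive Cond (n : ℕ) where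
  | member (k : Fin n)
  | card (l h : ℕ)

/-- Social conditions (SCs): a selection condition, a content (set of literals)
and a skeleton (set of nested SCs). -/
inductive SC (α : Type) (n : ℕ) where
  | mk (cond : Cond n) (content : List (Lit α)) (skel : List (SC α n))

/-- Occurrence of an atom in a social condition. -/
inductive SC.HasAtom {α : Type} {n : ℕ} (a : α) : SC α n → Prop where
  | content {c : Cond n} {cont : List (Lit α)} {skel : List (SC α n)} {b : Lit α}
      (hb : b ∈ cont) (h : b.atom = a) : SC.HasAtom a (.mk c cont skel)
  | skel {c : Cond n} {cont : List (Lit α)} {skel : List (SC α n)} {s' : SC α n}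
      (hs : s' ∈ skel) (h : SC.HasAtom a s') : SC.HasAtom a (.mk c cont skel)

/-- Well-formed social conditions: either simple (empty skeleton), or a cardinal
SC all of whose nested SCs are either well-formed cardinal SCs with `h' ≤ h`, or
simple member SCs. -/
inductive SC.WF {α : Type} {n : ℕ} : SC α n → Prop where
  | simple (c : Cond n) (content : List (Lit α)) : SC.WF (.mk c content [])
  | card (l h : ℕ) (content : List (Lit α)) (skel : List (SC α n))
      (hshape : ∀ s' ∈ skel,
        (∃ (l' h' : ℕ) (c' : List (Lit α)) (sk' : List (SC α n)),
            s' = SC.mk (.card l' h') c' sk' ∧ h' ≤ h) ∨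
        (∃ (k : Fin n) (c' : List (Lit α)), s' = SC.mk (.member k) c' []))
      (hwf : ∀ s' ∈ skel, ∀ (l' h' : ℕ) (c' : List (Lit α)) (sk' : List (SC α n)),
          s' = SC.mk (.card l' h') c' sk' → SC.WF s') :
      SC.WF (.mk (.card l h) content skel)

/-- A social rule: head atom (marked as a tolerance rule if the real head is
`okay(head)`), a body of literals, and a list of SCs, each marked positive
(`true`) or NAF (`false`). -/
structure SRule (α : Type) (n : ℕ) where
  head : α
  isOkay : Bool
  lits : List (Lit α)
  scs : List (SC α n × Bool)

/-- A SOLP program. -/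
abbrev SProgram (α : Type) (n : ℕ) := Set (SRule α n)

/-- `okay(p) ← body` becomes `p ← p, body`; other rules are unchanged. -/
def hatP {α : Type} {n : ℕ} (P : SProgram α n) : SProgram α n :=
  {r ∈ P | r.isOkay = false} ∪
    (fun r : SRule α n => ⟨r.head, false, .pos r.head :: r.lits, r.scs⟩) ''
      {r ∈ P | r.isOkay = true}

/-- The autonomous reduction: remove all social conditions. -/
def AP {α : Type} {n : ℕ} (P : SProgram α n) : SProgram α n :=
  (fun r : SRule α n => ⟨r.head, r.isOkay, r.lits, []⟩) '' P

/-- The atoms occurring in a SOLP program. -/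
def SVar {α : Type} {n : ℕ} (P : SProgram α n) : Set α :=
  {a | ∃ r ∈ P, r.head = a ∨ (∃ b ∈ r.lits, Lit.atom b = a) ∨
        (∃ p ∈ r.scs, SC.HasAtom a p.1)}

/-- Truth of a list of literals w.r.t. an interpretation. -/
def litsTrue {α : Type} (I : Set α) (L : List (Lit α)) : Prop := ∀ b ∈ L, b.holds I

/-- The autonomous immediate consequence operator `AT_P`. -/
def ATP {α : Type} {n : ℕ} (P : SProgram α n) (I : Set α) : Set α :=
  {a | ∃ r ∈ AP P, r.isOkay = false ∧ r.head = a ∧ litsTrue I r.lits} ∪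
  {a | ∃ r ∈ AP P, r.isOkay = true ∧ r.head = a ∧ a ∈ I ∧ litsTrue I r.lits}

/-- Autonomous fixpoints of a SOLP program. -/
def AFP {α : Type} {n : ℕ} (P : SProgram α n) : Set (Set α) :=
  {I | I ⊆ SVar (AP P) ∧ ATP P I = I}

/-- Social interpretations: sets of labelled atoms `a_{P_i}`. -/
abbrev SInterp (α : Type) (n : ℕ) := Set (Fin n × α)

/-- Truth of a literal for program `p` w.r.t. a social interpretation. -/
def Lit.trueFor {α : Type} {n : ℕ} (I : SInterp α n) (p : Fin n) : Lit α → Prop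
  | .pos a => (p, a) ∈ I
  | .neg a => (p, a) ∉ I

/-- Truth of an SC of `P_j` in a sub-collection `C'` w.r.t. a social interpretation. -/
inductive SC.TrueIn {α : Type} {n : ℕ} (I : SInterp α n) (j : Fin n) :
    Set (Fin n) → SC α n → Prop where
  | member {C' : Set (Fin n)} {k : Fin n} {content : List (Lit α)} {skel : List (SC α n)}
      (hk : k ∈ C') (hc : ∀ b ∈ content, Lit.trueFor I k b) :
      SC.TrueIn I j C' (.mk (.member k) content skel)
  | card {C' : Set (Fin n)} {l h : ℕ} {content : List (Lit α)} {skel : List (SC α n)}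
      (D : Finset (Fin n)) (hD : ∀ p ∈ D, p ∈ C' ∧ p ≠ j)
      (hl : l ≤ D.card) (hh : D.card ≤ h)
      (hc : ∀ b ∈ content, ∀ p ∈ D, Lit.trueFor I p b)
      (D' : ∀ s' ∈ skel, Finset (Fin n))
      (hsub : ∀ (s' : SC α n) (hs' : s' ∈ skel), D' s' hs' ⊆ D)
      (hs : ∀ (s' : SC α n) (hs' : s' ∈ skel), SC.TrueIn I j ↑(D' s' hs') s') :
      SC.TrueIn I j C' (.mk (.card l h) content skel)

/-- `s` is true for `P_j` w.r.t. `Ī` (in the whole collection). -/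
def SC.TrueFor {α : Type} {n : ℕ} (I : SInterp α n) (j : Fin n) (s : SC α n) : Prop :=
  SC.TrueIn I j Set.univ s

/-- Truth of the body of a social rule of `P_j` w.r.t. a social interpretation. -/
def SRule.bodyTrue {α : Type} {n : ℕ} (I : SInterp α n) (j : Fin n) (r : SRule α n) : Prop :=
  (∀ b ∈ r.lits, Lit.trueFor I j b) ∧
  (∀ p ∈ r.scs, (p.2 = true → SC.TrueFor I j p.1) ∧ (p.2 = false → ¬ SC.TrueFor I j p.1))

/-- The social immediate consequence operator `ST_C`. -/
def STC {α : Type} {n : ℕ} (C : Fin n → SProgram α n) (I : SInterp α n) : SInterp α n :=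
  {x | ∃ r ∈ C x.1, r.isOkay = false ∧ r.head = x.2 ∧ SRule.bodyTrue I x.1 r} ∪
  {x | ∃ r ∈ C x.1, r.isOkay = true ∧ r.head = x.2 ∧ x ∈ I ∧ SRule.bodyTrue I x.1 r}

/-- The labelled version `(L)_{P_i}` of a set of atoms. -/
def labelled {α : Type} {n : ℕ} (i : Fin n) (L : Set α) : SInterp α n :=
  {x | x.1 = i ∧ x.2 ∈ L}

/-- Candidate social interpretations: combinations of autonomous fixpoints. -/
def Candidate {α : Type} {n : ℕ} (C : Fin n → SProgram α n) (I : SInterp α n) : Prop :=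
  ∃ F : Fin n → Set α, (∀ i, F i ∈ AFP (C i)) ∧ I = ⋃ i, labelled i (F i)

/-- The Social Semantics: the set of social models. -/
def SOS {α : Type} {n : ℕ} (C : Fin n → SProgram α n) : Set (SInterp α n) :=
  {I | Candidate C I ∧ STC C I = I}

/-! ### Traditional (normal) logic programs -/

/-- A normal logic-program rule. -/
structure NRule (γ : Type) where
  head : γ
  body : List (Lit γ)

abbrev NProgram (γ : Type) := Set (NRule γ)

/-- The atoms occurring in a normal program. -/
def NVar {γ : Type} (P : NProgram γ) : Set γ :=
  {a | ∃ r ∈ P, r.head = a ∨ ∃ b ∈ r.body, Lit.atom b = a}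

/-- The immediate consequence operator `T_P`. -/
def TN {γ : Type} (P : NProgram γ) (I : Set γ) : Set γ :=
  {a | ∃ r ∈ P, r.head = a ∧ ∀ b ∈ r.body, b.holds I}

/-- Fixpoints of a traditional program. -/
def NFP {γ : Type} (P : NProgram γ) : Set (Set γ) :=
  {I | I ⊆ NVar P ∧ TN P I = I}

/-- Keep a positive literal, drop a negative one. -/
def Lit.posOnly {γ : Type} : Lit γ → Option (Lit γ)
  | .pos a => some (.pos a)
  | .neg _ => none

/-- The Gelfond–Lifschitz reduct `P^M`. -/
def GLReduct {γ : Type} (P : NProgram γ) (M : Set γ) : NProgram γ :=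
  {r | ∃ r' ∈ P, (∀ c : γ, Lit.neg c ∈ r'.body → c ∉ M) ∧
        r = ⟨r'.head, r'.body.filterMap Lit.posOnly⟩}

/-- The least model of a (positive) program, as the intersection of all sets
closed under its rules. -/
def LeastModel {γ : Type} (P : NProgram γ) : Set γ :=
  ⋂₀ {I | ∀ r ∈ P, (∀ a : γ, Lit.pos a ∈ r.body → a ∈ I) → r.head ∈ I}

/-- Stable models (Gelfond–Lifschitz) of a normal program. -/
def SMN {γ : Type} (P : NProgram γ) : Set (Set γ) :=
  {M | M = LeastModel (GLReduct P M)}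

/-! ### The translation vocabulary -/

/-- Atoms of the translated programs: `a_P`, `a'_P`, `sa_P`, `fail_P`, `ρ(s)_P`
and the `g(s)(k)_P` predicates. -/
inductive GAtom (α : Type) (n : ℕ) where
  | atm (a : α)
  | prim (a : α)
  | sup (a : α)
  | fail
  | rho (s : SC α n)
  | g (s : SC α n) (k : Fin n)

/-- The guessing rules `S_1` over a vocabulary `V`. -/
def GammaS1 {α : Type} {n : ℕ} (V : Set α) : NProgram (GAtom α n) :=
  {r | ∃ a ∈ V, r = ⟨GAtom.atm a, [Lit.neg (GAtom.prim a)]⟩ ∨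
                r = ⟨GAtom.prim a, [Lit.neg (GAtom.atm a)]⟩}

/-- The checking rules `S_3` over a vocabulary `V`. -/
def GammaS3 {α : Type} {n : ℕ} (V : Set α) : NProgram (GAtom α n) :=
  {r | ∃ a ∈ V,
      r = ⟨GAtom.fail, [Lit.neg GAtom.fail, Lit.pos (GAtom.sup a), Lit.neg (GAtom.atm a)]⟩ ∨
      r = ⟨GAtom.fail, [Lit.neg GAtom.fail, Lit.pos (GAtom.atm a), Lit.neg (GAtom.sup a)]⟩}

/-- The transformation `Γ` of Buccafurri–Gottlob, for traditional programs. -/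
def Gamma {α : Type} {n : ℕ} (P : NProgram α) : NProgram (GAtom α n) :=
  GammaS1 (NVar P) ∪
  {r | ∃ r' ∈ P, r = ⟨GAtom.sup r'.head, r'.body.map (Lit.map GAtom.atm)⟩} ∪
  GammaS3 (NVar P)

/-- The translated body of a social rule: labelled literals followed by the
`ρ`-literals corresponding to its (possibly NAF'd) SCs. -/
def SRule.transBody {α : Type} {n : ℕ} (r : SRule α n) : List (Lit (GAtom α n)) :=
  r.lits.map (Lit.map GAtom.atm) ++
    r.scs.map (fun p => if p.2 then Lit.pos (GAtom.rho p.1) else Lit.neg (GAtom.rho p.1))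

/-- The extended transformation `Γ'` for SOLP programs. -/
def Gamma' {α : Type} {n : ℕ} (Q : SProgram α n) : NProgram (GAtom α n) :=
  GammaS1 (SVar (AP (hatP Q))) ∪
  {r | ∃ r' ∈ Q, r = ⟨GAtom.sup r'.head, SRule.transBody r'⟩} ∪
  GammaS3 (SVar (AP (hatP Q)))

/-- Forget the SCs (and okay-marking) of a social rule, yielding a traditional rule. -/
def SRule.toN {α : Type} {n : ℕ} (r : SRule α n) : NRule α := ⟨r.head, r.lits⟩

/-- View an SC-free SOLP program as a traditional program. -/
def toTrad {α : Type} {n : ℕ} (P : SProgram α n) : NProgram α := SRule.toN '' P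

/-- The encoding `[M]_P` of an interpretation of a SOLP program `P`. -/
def encode {α : Type} {n : ℕ} (P : SProgram α n) (M : Set α) : Set (GAtom α n) :=
  (GAtom.atm '' M) ∪ (GAtom.prim '' (SVar (AP (hatP P)) \ M)) ∪ (GAtom.sup '' M)

/-- The encoding `[M]_P` of an interpretation of a traditional program `P`. -/
def encodeN {α : Type} (n : ℕ) (P : NProgram α) (M : Set α) : Set (GAtom α n) :=
  (GAtom.atm '' M) ∪ (GAtom.prim '' (NVar P \ M)) ∪ (GAtom.sup '' M)

/-- Renaming of rules. -/
def NRule.map {γ δ : Type} (f : γ → δ) (r : NRule γ) : NRule δ :=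
  ⟨f r.head, r.body.map (Lit.map f)⟩

/-- Labelling of a whole program w.r.t. `P_i`. -/
def labProg {γ : Type} {n : ℕ} (i : Fin n) (P : NProgram γ) : NProgram (Fin n × γ) :=
  (NRule.map (fun a => (i, a))) '' P

/-! ### Aggregate programs -/

/-- A `#count` aggregate `l ≤ #count{K : atomOf K, cond K} ≤ h`. -/
structure CountAgg (γ : Type) (κ : Type) where
  l : ℕ
  h : ℕ
  atomOf : κ → γ
  cond : κ → Prop

/-- Truth of a count aggregate w.r.t. an interpretation. -/
def CountAgg.holds {γ κ : Type} (M : Set γ) (c : CountAgg γ κ) : Prop :=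
  c.l ≤ Set.ncard {K | c.cond K ∧ c.atomOf K ∈ M} ∧
  Set.ncard {K | c.cond K ∧ c.atomOf K ∈ M} ≤ c.h

/-- A rule of a logic program with count aggregates. -/
structure ARule (γ : Type) (κ : Type) where
  head : γ
  body : List (Lit γ)
  aggs : List (CountAgg γ κ)

abbrev AProgram (γ : Type) (κ : Type) := Set (ARule γ κ)

/-- Truth of the body of an aggregate rule. -/
def ARule.bodyHolds {γ κ : Type} (M : Set γ) (r : ARule γ κ) : Prop :=
  (∀ b ∈ r.body, b.holds M) ∧ (∀ c ∈ r.aggs, c.holds M)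

/-- `M` is a (classical) model of an aggregate program. -/
def AModel {γ κ : Type} (P : AProgram γ κ) (M : Set γ) : Prop :=
  ∀ r ∈ P, r.bodyHolds M → r.head ∈ M

/-- Stable (answer-set) semantics for aggregate programs: `M` is a minimal model
of the reduct consisting of the rules whose bodies are true w.r.t. `M`. -/
def AStable {γ κ : Type} (P : AProgram γ κ) (M : Set γ) : Prop :=
  AModel P M ∧
  ∀ N : Set γ, N ⊆ M → (∀ r ∈ P, r.bodyHolds M → r.bodyHolds N → r.head ∈ N) → N = M

/-- An aggregate-free rule, seen as an aggregate rule. -/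
def NRule.toA {γ : Type} (κ : Type) (r : NRule γ) : ARule γ κ := ⟨r.head, r.body, []⟩

def toAProg {γ : Type} (κ : Type) (P : NProgram γ) : AProgram γ κ := NRule.toA κ '' P

/-! ### The translation `Ψ` of social conditions -/

/-- Membership of a rule in the translation `Ψ^{P_j}(s)` of a social condition. -/
inductive PsiMem {α : Type} {n : ℕ} (j : Fin n) :
    SC α n → ARule (Fin n × GAtom α n) (Fin n) → Prop where
  | memberGuess (k : Fin n) (content : List (Lit α)) (skel : List (SC α n)) :
      PsiMem j (.mk (.member k) content skel)
        ⟨(j, GAtom.g (.mk (.member k) content skel) k),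
          content.map (Lit.map fun a => (k, GAtom.atm a)), []⟩
  | memberCheck (k : Fin n) (content : List (Lit α)) (skel : List (SC α n)) :
      PsiMem j (.mk (.member k) content skel)
        ⟨(j, GAtom.rho (.mk (.member k) content skel)),
          [Lit.pos (j, GAtom.g (.mk (.member k) content skel) k)], []⟩
  | cardGuess (l h : ℕ) (content : List (Lit α)) (skel : List (SC α n))
      (i : Fin n) (hij : i ≠ j) :
      PsiMem j (.mk (.card l h) content skel)
        ⟨(j, GAtom.g (.mk (.card l h) content skel) i),
          content.map (Lit.map fun a => (i, GAtom.atm a)) ++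
            skel.map (fun s' => Lit.pos (j, GAtom.rho s')), []⟩
  | cardCheck (l h : ℕ) (content : List (Lit α)) (skel : List (SC α n)) :
      PsiMem j (.mk (.card l h) content skel)
        ⟨(j, GAtom.rho (.mk (.card l h) content skel)), [],
          [⟨l, h, fun K => (j, GAtom.g (.mk (.card l h) content skel) K),
            fun K => K ≠ j⟩]⟩
  | nested (l h : ℕ) (content : List (Lit α)) (skel : List (SC α n))
      (s' : SC α n) (hs : s' ∈ skel) (r : ARule (Fin n × GAtom α n) (Fin n))
      (hr : PsiMem j s' r) :
      PsiMem j (.mk (.card l h) content skel) r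

/-- The translation `Ψ^{P_j}(s)` of a single social condition. -/
def Psi {α : Type} {n : ℕ} (j : Fin n) (s : SC α n) :
    AProgram (Fin n × GAtom α n) (Fin n) :=
  {r | PsiMem j s r}

/-- The depth-0 social conditions of a SOLP program. -/
def MSC {α : Type} {n : ℕ} (P : SProgram α n) : Set (SC α n) :=
  {s | ∃ r ∈ P, ∃ b : Bool, (s, b) ∈ r.scs}

/-- The SC translation `C(P_1, ..., P_n)` of a whole SOLP collection. -/
def CTrans {α : Type} {n : ℕ} (C : Fin n → SProgram α n) :
    AProgram (Fin n × GAtom α n) (Fin n) :=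
  ⋃ j, ⋃ s ∈ MSC (C j), Psi j s

/-- The program of facts `{a ← : a ∈ Ī}` corresponding to a social interpretation. -/
def factProg {α : Type} {n : ℕ} (I : SInterp α n) :
    AProgram (Fin n × GAtom α n) (Fin n) :=
  {r | ∃ x ∈ I, r = ⟨(x.1, GAtom.atm x.2), [], []⟩}

/-- The set `SAT^{P_j}_{Ī}(s)` of heads of rules of `Ψ^{P_j}(s)` belonging to
some stable model of `C(P_1,...,P_n) ∪ Q`. -/
def SAT {α : Type} {n : ℕ} (C : Fin n → SProgram α n) (I : SInterp α n)
    (j : Fin n) (s : SC α n) : Set (Fin n × GAtom α n) :=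
  {x | (∃ r, PsiMem j s r ∧ r.head = x) ∧
       ∃ M, AStable (CTrans C ∪ factProg I) M ∧ x ∈ M}

/-! ### COLP programs -/

/-- A COLP rule: a classical rule or an okay-rule, with a body of literals. -/
structure CRule (α : Type) where
  head : α
  isOkay : Bool
  lits : List (Lit α)

abbrev CProgram (α : Type) := Set (CRule α)

/-- The hat operator on COLP programs: `okay(p) ← body` becomes `p ← p, body`. -/
def CRule.hatN {α : Type} (r : CRule α) : NRule α :=
  if r.isOkay then ⟨r.head, .pos r.head :: r.lits⟩ else ⟨r.head, r.lits⟩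

def hatC {α : Type} (P : CProgram α) : NProgram α := CRule.hatN '' P

/-- The SOLP translation `σ^n` of a COLP rule. -/
def sigmaRule {α : Type} (n : ℕ) (r : CRule α) : SRule α n :=
  ⟨r.head, r.isOkay, r.lits, [(SC.mk (.card (n - 1) (n - 1)) [Lit.pos r.head] [], true)]⟩

/-- The SOLP translation `σ^n` of a COLP program. -/
def sigmaP {α : Type} (n : ℕ) (P : CProgram α) : SProgram α n := sigmaRule n '' P

/-- The joint fixpoints `JFP(P_1,...,P_n)` of a collection of COLP programs. -/
def JFP {α : Type} {n : ℕ} (P : Fin n → CProgram α) : Set (Set α) :=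
  ⋂ i, NFP (hatC (P i))

end SOLP

/-!
The programs `labProg i (Γ'(A(P̂_i)))` carry pairwise distinct labels, so the Gelfond–Lifschitz
reduct and the least model of their union split label by label: the stable models of `P_u` are
exactly the families of stable models of the single programs `Γ'(A(P̂_i))`.

For a single program, `Γ'(A(P̂))` guesses every `a` through `a ← not a'`, `a' ← not a`, derives the
supports `sa` with the rules of `A(P̂)`, and its `fail` constraints kill every guess with `sa ≠ a`.
So a stable model is a supported model whose guessed set `F` satisfies `T_{A(P̂)}(F) = F`, and
`T_{A(P̂)} = AT_P` because `p ← p, body` fires exactly when `okay(p) ← body` does with `p` true.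
Conversely, for such `F` the encoding `[F]_P` is derivable in the reduct. Finally
`(F)_P ∪ ([F]_P ∖ (F)_P) = [F]_P`.
-/

namespace SOLP

variable {α γ δ : Type} {n : ℕ}

section Literals

lemma litsTrue_iff {I : Set γ} {L : List (Lit γ)} :
    litsTrue I L ↔ (∀ a, Lit.pos a ∈ L → a ∈ I) ∧ (∀ a, Lit.neg a ∈ L → a ∉ I) := by
  refine ⟨fun h => ⟨fun a ha => h _ ha, fun a ha => h _ ha⟩, fun ⟨hp, hn⟩ b hb => ?_⟩
  cases b with
  | pos a => exact hp a hb
  | neg a => exact hn a hb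

lemma pos_mem_map_iff {f : γ → δ} {L : List (Lit γ)} {c : δ} :
    Lit.pos c ∈ L.map (Lit.map f) ↔ ∃ a, Lit.pos a ∈ L ∧ f a = c := by
  constructor
  · intro h
    obtain ⟨b, hb, he⟩ := List.mem_map.1 h
    cases b with
    | pos a => exact ⟨a, hb, Lit.pos.inj he⟩
    | neg a => cases he
  · rintro ⟨a, ha, rfl⟩
    exact List.mem_map_of_mem ha

lemma neg_mem_map_iff {f : γ → δ} {L : List (Lit γ)} {c : δ} :
    Lit.neg c ∈ L.map (Lit.map f) ↔ ∃ a, Lit.neg a ∈ L ∧ f a = c := by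
  constructor
  · intro h
    obtain ⟨b, hb, he⟩ := List.mem_map.1 h
    cases b with
    | pos a => cases he
    | neg a => exact ⟨a, hb, Lit.neg.inj he⟩
  · rintro ⟨a, ha, rfl⟩
    exact List.mem_map_of_mem ha

lemma litsTrue_map (f : γ → δ) (I : Set δ) (L : List (Lit γ)) :
    litsTrue I (L.map (Lit.map f)) ↔ litsTrue (f ⁻¹' I) L := by
  simp only [litsTrue_iff, pos_mem_map_iff, neg_mem_map_iff]
  grind

lemma pos_mem_filterMap_posOnly {L : List (Lit γ)} {a : γ} :
    Lit.pos a ∈ L.filterMap Lit.posOnly ↔ Lit.pos a ∈ L := by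
  rw [List.mem_filterMap]
  constructor
  · rintro ⟨b, hb, he⟩
    cases b with
    | pos a => cases he; exact hb
    | neg a => cases he
  · exact fun h => ⟨_, h, rfl⟩

lemma filterMap_posOnly_map (f : γ → δ) (L : List (Lit γ)) :
    (L.map (Lit.map f)).filterMap Lit.posOnly = (L.filterMap Lit.posOnly).map (Lit.map f) := by
  induction L with
  | nil => rfl
  | cons b L ih => cases b <;> simp [Lit.map, Lit.posOnly, List.filterMap_cons, ih]

end Literals

section StableModels

variable {P : NProgram γ} {M N : Set γ} {r : NRule γ} {x : γ}

lemma leastModel_subset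
    (h : ∀ r ∈ P, (∀ a, Lit.pos a ∈ r.body → a ∈ N) → r.head ∈ N) : LeastModel P ⊆ N :=
  fun _ hx => Set.mem_sInter.1 hx N h

lemma head_mem_leastModel (hr : r ∈ P) (hb : ∀ a, Lit.pos a ∈ r.body → a ∈ LeastModel P) :
    r.head ∈ LeastModel P :=
  Set.mem_sInter.2 fun _ hN => hN r hr fun a ha => Set.mem_sInter.1 (hb a ha) _ hN

lemma exists_rule_of_mem_leastModel (hx : x ∈ LeastModel P) :
    ∃ r ∈ P, r.head = x ∧ ∀ a, Lit.pos a ∈ r.body → a ∈ LeastModel P := by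
  refine leastModel_subset (N := {y | ∃ r ∈ P, r.head = y ∧
    ∀ a, Lit.pos a ∈ r.body → a ∈ LeastModel P}) (fun r hr hb => ?_) hx
  refine ⟨r, hr, rfl, fun a ha => ?_⟩
  obtain ⟨r', hr', rfl, hb'⟩ := hb a ha
  exact head_mem_leastModel hr' hb'

lemma leastModel_GLReduct_subset
    (h : ∀ r ∈ P, (∀ c, Lit.neg c ∈ r.body → c ∉ M) → (∀ a, Lit.pos a ∈ r.body → a ∈ N) →
      r.head ∈ N) :
    LeastModel (GLReduct P M) ⊆ N := by
  refine leastModel_subset fun r hr hb => ?_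
  obtain ⟨r', hr', hneg, rfl⟩ := hr
  exact h r' hr' hneg fun a ha => hb a (pos_mem_filterMap_posOnly.2 ha)

lemma head_mem_leastModel_GLReduct (hr : r ∈ P) (hneg : ∀ c, Lit.neg c ∈ r.body → c ∉ M)
    (hpos : ∀ a, Lit.pos a ∈ r.body → a ∈ LeastModel (GLReduct P M)) :
    r.head ∈ LeastModel (GLReduct P M) :=
  head_mem_leastModel (r := ⟨r.head, r.body.filterMap Lit.posOnly⟩) ⟨r, hr, hneg, rfl⟩
    fun a ha => hpos a (pos_mem_filterMap_posOnly.1 ha)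

lemma exists_rule_of_mem_leastModel_GLReduct (hx : x ∈ LeastModel (GLReduct P M)) :
    ∃ r ∈ P, r.head = x ∧ (∀ c, Lit.neg c ∈ r.body → c ∉ M) ∧
      ∀ a, Lit.pos a ∈ r.body → a ∈ LeastModel (GLReduct P M) := by
  obtain ⟨_, ⟨r, hr, hneg, rfl⟩, rfl, hpos⟩ := exists_rule_of_mem_leastModel hx
  exact ⟨r, hr, rfl, hneg, fun a ha => hpos a (pos_mem_filterMap_posOnly.2 ha)⟩

lemma TN_eq_of_mem_SMN (hM : M ∈ SMN P) : TN P M = M := by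
  have hM : M = LeastModel (GLReduct P M) := hM
  apply Set.Subset.antisymm
  · rintro _ ⟨r, hr, rfl, hb⟩
    obtain ⟨hpos, hneg⟩ := litsTrue_iff.1 hb
    rw [hM]
    exact head_mem_leastModel_GLReduct hr hneg fun a ha => hM ▸ hpos a ha
  · intro x hx
    obtain ⟨r, hr, rfl, hneg, hpos⟩ := exists_rule_of_mem_leastModel_GLReduct (hM ▸ hx)
    exact ⟨r, hr, rfl, litsTrue_iff.2 ⟨fun a ha => hM ▸ hpos a ha, hneg⟩⟩

lemma mem_SMN_of_TN_subset (hmodel : TN P M ⊆ M) (hderiv : M ⊆ LeastModel (GLReduct P M)) :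
    M ∈ SMN P :=
  hderiv.antisymm <| leastModel_GLReduct_subset fun r hr hneg hpos =>
    hmodel ⟨r, hr, rfl, litsTrue_iff.2 ⟨hpos, hneg⟩⟩

end StableModels

section Labelling

lemma preimage_prodMk_iUnion_image {ι : Type*} (S : ι → Set γ) (i : ι) :
    Prod.mk i ⁻¹' ⋃ j, Prod.mk j '' S j = S i := by
  ext; simp

lemma iUnion_image_preimage_prodMk {ι : Type*} (M : Set (ι × γ)) :
    ⋃ i, Prod.mk i '' (Prod.mk i ⁻¹' M) = M := by
  ext ⟨i, a⟩; simp

lemma forall_preimage_prodMk_mem_image_iff {ι β : Type*} (E : ι → β → Set γ) (S : ι → Set β)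
    (M : Set (ι × γ)) :
    (∀ i, Prod.mk i ⁻¹' M ∈ E i '' S i) ↔
      ∃ F : ι → β, (∀ i, F i ∈ S i) ∧ M = ⋃ i, Prod.mk i '' E i (F i) := by
  constructor
  · intro h
    choose F hF hM using h
    refine ⟨F, hF, ?_⟩
    conv_lhs => rw [← iUnion_image_preimage_prodMk M]
    simp only [hM]
  · rintro ⟨F, hF, rfl⟩ i
    exact ⟨F i, hF i, (preimage_prodMk_iUnion_image (fun j => E j (F j)) i).symm⟩

lemma GLReduct_iUnion {ι : Type*} (P : ι → NProgram γ) (M : Set γ) :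
    GLReduct (⋃ i, P i) M = ⋃ i, GLReduct (P i) M := by
  ext r
  simp only [GLReduct, Set.mem_ofPred_eq, Set.mem_iUnion]
  tauto

lemma GLReduct_labProg (i : Fin n) (P : NProgram γ) (M : Set (Fin n × γ)) :
    GLReduct (labProg i P) M = labProg i (GLReduct P (Prod.mk i ⁻¹' M)) := by
  ext r
  simp only [GLReduct, labProg, NRule.map, Set.mem_image, Set.mem_ofPred_eq]
  constructor
  · rintro ⟨_, ⟨r, hr, rfl⟩, hneg, rfl⟩
    exact ⟨_, ⟨r, hr, fun c hc => hneg _ (neg_mem_map_iff.2 ⟨c, hc, rfl⟩), rfl⟩,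
      by rw [filterMap_posOnly_map]⟩
  · rintro ⟨_, ⟨r, hr, hneg, rfl⟩, rfl⟩
    refine ⟨_, ⟨r, hr, rfl⟩, fun c hc => ?_, by rw [filterMap_posOnly_map]⟩
    obtain ⟨a, ha, rfl⟩ := neg_mem_map_iff.1 hc
    exact hneg a ha

lemma leastModel_iUnion_labProg (P : Fin n → NProgram γ) :
    LeastModel (⋃ i, labProg i (P i)) = ⋃ i, Prod.mk i '' LeastModel (P i) := by
  apply Set.Subset.antisymm
  · refine leastModel_subset fun _ hlab hb => ?_
    obtain ⟨i, r, hr, rfl⟩ := Set.mem_iUnion.1 hlab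
    refine Set.mem_iUnion.2 ⟨i, Set.mem_image_of_mem _ (head_mem_leastModel hr fun a ha => ?_)⟩
    rw [← preimage_prodMk_iUnion_image (fun j => LeastModel (P j)) i]
    exact hb _ (pos_mem_map_iff.2 ⟨a, ha, rfl⟩)
  · refine Set.iUnion_subset fun i => Set.image_subset_iff.2 <| leastModel_subset fun r hr hb => ?_
    refine head_mem_leastModel (r := NRule.map (Prod.mk i) r)
      (Set.mem_iUnion.2 ⟨i, r, hr, rfl⟩) fun c hc => ?_
    obtain ⟨a, ha, rfl⟩ := pos_mem_map_iff.1 hc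
    exact hb a ha

lemma mem_SMN_iUnion_labProg (P : Fin n → NProgram γ) (M : Set (Fin n × γ)) :
    M ∈ SMN (⋃ i, labProg i (P i)) ↔ ∀ i, Prod.mk i ⁻¹' M ∈ SMN (P i) := by
  simp only [SMN, Set.mem_ofPred_eq, GLReduct_iUnion, GLReduct_labProg, leastModel_iUnion_labProg]
  constructor
  · intro h i
    conv_lhs => rw [h]
    exact preimage_prodMk_iUnion_image _ i
  · intro h
    conv_lhs => rw [← iUnion_image_preimage_prodMk M]
    simp only [← h]

end Labelling

section Autonomous

def conseq (Q : SProgram α n) (I : Set α) : Set α :=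
  {a | ∃ r ∈ Q, r.head = a ∧ litsTrue I r.lits}

lemma head_mem_SVar {Q : SProgram α n} {r : SRule α n} (hr : r ∈ Q) : r.head ∈ SVar Q :=
  ⟨r, hr, Or.inl rfl⟩

lemma conseq_subset_SVar (Q : SProgram α n) (I : Set α) : conseq Q I ⊆ SVar Q := by
  rintro _ ⟨r, hr, rfl, -⟩
  exact head_mem_SVar hr

lemma mem_AP_hatP {P : SProgram α n} {r : SRule α n} :
    r ∈ AP (hatP P) ↔
      (∃ r' ∈ P, r'.isOkay = false ∧ r = ⟨r'.head, false, r'.lits, []⟩) ∨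
      (∃ r' ∈ P, r'.isOkay = true ∧ r = ⟨r'.head, false, .pos r'.head :: r'.lits, []⟩) := by
  simp only [AP, hatP, Set.image_union, Set.image_image, Set.mem_union, Set.mem_image,
    Set.mem_sep_iff, and_assoc]
  constructor
  · rintro (⟨r', hr', hok, rfl⟩ | ⟨r', hr', hok, rfl⟩)
    · exact Or.inl ⟨r', hr', hok, by rw [hok]⟩
    · exact Or.inr ⟨r', hr', hok, rfl⟩
  · rintro (⟨r', hr', hok, rfl⟩ | ⟨r', hr', hok, rfl⟩)
    · exact Or.inl ⟨r', hr', hok, by rw [hok]⟩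
    · exact Or.inr ⟨r', hr', hok, rfl⟩

lemma hatP_eq_self {Q : SProgram α n} (h : ∀ r ∈ Q, r.isOkay = false) : hatP Q = Q := by
  have hnone : {r ∈ Q | r.isOkay = true} = ∅ :=
    Set.eq_empty_of_forall_notMem fun r ⟨hr, hok⟩ => by simp [h r hr] at hok
  rw [hatP, hnone, Set.image_empty, Set.union_empty, Set.sep_eq_self_iff_mem_true]
  exact h

lemma AP_eq_self {Q : SProgram α n} (h : ∀ r ∈ Q, r.scs = []) : AP Q = Q := by
  refine (Set.image_congr fun r hr => ?_).trans (Set.image_id' Q)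
  rw [← h r hr]

lemma AP_hatP_AP_hatP (P : SProgram α n) : AP (hatP (AP (hatP P))) = AP (hatP P) := by
  rw [hatP_eq_self, AP_eq_self] <;> intro r hr <;>
    rcases mem_AP_hatP.1 hr with ⟨r', -, -, rfl⟩ | ⟨r', -, -, rfl⟩ <;> rfl

lemma mem_SVar_AP {Q : SProgram α n} {a : α} :
    a ∈ SVar (AP Q) ↔ ∃ r ∈ Q, r.head = a ∨ ∃ b ∈ r.lits, b.atom = a := by
  simp [SVar, AP]

lemma SVar_AP_hatP (P : SProgram α n) : SVar (AP (hatP P)) = SVar (AP P) := by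
  ext a
  simp only [mem_SVar_AP]
  constructor
  · rintro ⟨r, (⟨hr, -⟩ | ⟨r, ⟨hr, -⟩, rfl⟩), h⟩
    · exact ⟨r, hr, h⟩
    · exact ⟨r, hr, by simpa [Lit.atom] using h⟩
  · rintro ⟨r, hr, h⟩
    cases hok : r.isOkay
    · exact ⟨r, Or.inl ⟨hr, hok⟩, h⟩
    · exact ⟨_, Or.inr ⟨r, ⟨hr, hok⟩, rfl⟩, by simpa [Lit.atom] using h⟩

lemma ATP_eq_conseq (P : SProgram α n) (I : Set α) : ATP P I = conseq (AP (hatP P)) I := by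
  ext a
  constructor
  · rintro (⟨_, ⟨r, hr, rfl⟩, hok, rfl, hL⟩ | ⟨_, ⟨r, hr, rfl⟩, hok, rfl, hI, hL⟩)
    · exact ⟨_, mem_AP_hatP.2 (Or.inl ⟨r, hr, hok, rfl⟩), rfl, hL⟩
    · exact ⟨_, mem_AP_hatP.2 (Or.inr ⟨r, hr, hok, rfl⟩), rfl, List.forall_mem_cons.2 ⟨hI, hL⟩⟩
  · rintro ⟨_, hrQ, rfl, hL⟩
    rcases mem_AP_hatP.1 hrQ with ⟨r, hr, hok, rfl⟩ | ⟨r, hr, hok, rfl⟩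
    · exact Or.inl ⟨_, ⟨r, hr, rfl⟩, hok, rfl, hL⟩
    · obtain ⟨hI, hL⟩ := List.forall_mem_cons.1 hL
      exact Or.inr ⟨_, ⟨r, hr, rfl⟩, hok, rfl, hI, hL⟩

lemma mem_AFP_iff {P : SProgram α n} {F : Set α} :
    F ∈ AFP P ↔ F ⊆ SVar (AP (hatP P)) ∧ conseq (AP (hatP P)) F = F := by
  rw [AFP, Set.mem_ofPred_eq, SVar_AP_hatP, ATP_eq_conseq]

end Autonomous

section Gamma

lemma TN_union (P Q : NProgram γ) (M : Set γ) : TN (P ∪ Q) M = TN P M ∪ TN Q M := by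
  ext
  simp [TN, or_and_right, exists_or]

lemma TN_GammaS1 (V : Set α) (M : Set (GAtom α n)) :
    TN (GammaS1 V) M =
      GAtom.atm '' {a ∈ V | GAtom.prim a ∉ M} ∪ GAtom.prim '' {a ∈ V | GAtom.atm a ∉ M} := by
  ext x
  constructor
  · rintro ⟨_, ⟨a, ha, rfl | rfl⟩, rfl, hb⟩
    · exact Or.inl ⟨a, ⟨ha, hb _ List.mem_cons_self⟩, rfl⟩
    · exact Or.inr ⟨a, ⟨ha, hb _ List.mem_cons_self⟩, rfl⟩
  · rintro (⟨a, ⟨ha, hb⟩, rfl⟩ | ⟨a, ⟨ha, hb⟩, rfl⟩)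
    · exact ⟨_, ⟨a, ha, Or.inl rfl⟩, rfl, List.forall_mem_singleton.2 hb⟩
    · exact ⟨_, ⟨a, ha, Or.inr rfl⟩, rfl, List.forall_mem_singleton.2 hb⟩

lemma TN_supRules (Q : SProgram α n) (M : Set (GAtom α n)) :
    TN {r | ∃ r' ∈ Q, r = ⟨GAtom.sup r'.head, r'.lits.map (Lit.map GAtom.atm)⟩} M =
      GAtom.sup '' conseq Q (GAtom.atm ⁻¹' M) := by
  ext x
  constructor
  · rintro ⟨_, ⟨r, hr, rfl⟩, rfl, hb⟩
    exact ⟨r.head, ⟨r, hr, rfl, (litsTrue_map _ _ _).1 hb⟩, rfl⟩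
  · rintro ⟨_, ⟨r, hr, rfl, hb⟩, rfl⟩
    exact ⟨_, ⟨r, hr, rfl⟩, rfl, (litsTrue_map _ _ _).2 hb⟩

lemma TN_GammaS3 (V : Set α) (M : Set (GAtom α n)) :
    TN (GammaS3 V) M = {x | x = GAtom.fail ∧ GAtom.fail ∉ M ∧
      ∃ a ∈ V, (GAtom.sup a ∈ M ∧ GAtom.atm a ∉ M) ∨ (GAtom.atm a ∈ M ∧ GAtom.sup a ∉ M)} := by
  ext x
  simp only [TN, GammaS3, Set.mem_ofPred_eq]
  constructor
  · rintro ⟨_, ⟨a, ha, rfl | rfl⟩, rfl, hb⟩ <;> simp only [List.forall_mem_cons] at hb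
    · exact ⟨rfl, hb.1, a, ha, Or.inl ⟨hb.2.1, hb.2.2.1⟩⟩
    · exact ⟨rfl, hb.1, a, ha, Or.inr ⟨hb.2.1, hb.2.2.1⟩⟩
  · rintro ⟨rfl, hf, a, ha, ⟨h1, h2⟩ | ⟨h1, h2⟩⟩
    · exact ⟨_, ⟨a, ha, Or.inl rfl⟩, rfl, by simp [Lit.holds, hf, h1, h2]⟩
    · exact ⟨_, ⟨a, ha, Or.inr rfl⟩, rfl, by simp [Lit.holds, hf, h1, h2]⟩

lemma scs_eq_nil_of_mem_AP {Q : SProgram α n} {r : SRule α n} (hr : r ∈ AP Q) : r.scs = [] := by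
  obtain ⟨r, -, rfl⟩ := hr
  rfl

lemma Gamma'_AP_hatP (P : SProgram α n) :
    Gamma' (AP (hatP P)) = GammaS1 (SVar (AP (hatP P))) ∪
      {r | ∃ r' ∈ AP (hatP P), r = ⟨GAtom.sup r'.head, r'.lits.map (Lit.map GAtom.atm)⟩} ∪
      GammaS3 (SVar (AP (hatP P))) := by
  rw [Gamma', AP_hatP_AP_hatP]
  congr 2
  ext r
  simp only [Set.mem_ofPred_eq]
  refine exists_congr fun r' => and_congr_right fun hr' => ?_
  rw [SRule.transBody, scs_eq_nil_of_mem_AP hr', List.map_nil, List.append_nil]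

variable {P : SProgram α n} {M : Set (GAtom α n)} {a : α}

lemma atm_mem_TN_Gamma' :
    GAtom.atm a ∈ TN (Gamma' (AP (hatP P))) M ↔
      a ∈ SVar (AP (hatP P)) ∧ GAtom.prim a ∉ M := by
  simp [Gamma'_AP_hatP, TN_union, TN_GammaS1, TN_supRules, TN_GammaS3]

lemma prim_mem_TN_Gamma' :
    GAtom.prim a ∈ TN (Gamma' (AP (hatP P))) M ↔
      a ∈ SVar (AP (hatP P)) ∧ GAtom.atm a ∉ M := by
  simp [Gamma'_AP_hatP, TN_union, TN_GammaS1, TN_supRules, TN_GammaS3]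

lemma sup_mem_TN_Gamma' :
    GAtom.sup a ∈ TN (Gamma' (AP (hatP P))) M ↔
      a ∈ conseq (AP (hatP P)) (GAtom.atm ⁻¹' M) := by
  simp [Gamma'_AP_hatP, TN_union, TN_GammaS1, TN_supRules, TN_GammaS3]

lemma fail_mem_TN_Gamma' :
    GAtom.fail ∈ TN (Gamma' (AP (hatP P))) M ↔ GAtom.fail ∉ M ∧
      ∃ a ∈ SVar (AP (hatP P)), (GAtom.sup a ∈ M ∧ GAtom.atm a ∉ M) ∨
        (GAtom.atm a ∈ M ∧ GAtom.sup a ∉ M) := by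
  simp [Gamma'_AP_hatP, TN_union, TN_GammaS1, TN_supRules, TN_GammaS3]

lemma rho_notMem_TN_Gamma' (s : SC α n) : GAtom.rho s ∉ TN (Gamma' (AP (hatP P))) M := by
  simp [Gamma'_AP_hatP, TN_union, TN_GammaS1, TN_supRules, TN_GammaS3]

lemma g_notMem_TN_Gamma' (s : SC α n) (k : Fin n) :
    GAtom.g s k ∉ TN (Gamma' (AP (hatP P))) M := by
  simp [Gamma'_AP_hatP, TN_union, TN_GammaS1, TN_supRules, TN_GammaS3]

end Gamma

section StableModelsOfGamma'

variable {P : SProgram α n} {M : Set (GAtom α n)} {F : Set α}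

lemma image_atm_subset_encode : GAtom.atm '' F ⊆ encode P F :=
  fun _ hx => Or.inl (Or.inl hx)

@[simp] lemma atm_mem_encode {a : α} : GAtom.atm a ∈ encode P F ↔ a ∈ F := by
  simp [encode]

@[simp] lemma prim_mem_encode {a : α} :
    GAtom.prim a ∈ encode P F ↔ a ∈ SVar (AP (hatP P)) ∧ a ∉ F := by
  simp [encode]

@[simp] lemma sup_mem_encode {a : α} : GAtom.sup a ∈ encode P F ↔ a ∈ F := by
  simp [encode]

@[simp] lemma fail_notMem_encode : GAtom.fail ∉ encode P F := by
  simp [encode]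

@[simp] lemma rho_notMem_encode (s : SC α n) : GAtom.rho s ∉ encode P F := by
  simp [encode]

@[simp] lemma g_notMem_encode (s : SC α n) (k : Fin n) : GAtom.g s k ∉ encode P F := by
  simp [encode]

lemma preimage_atm_encode : GAtom.atm ⁻¹' encode P F = F := by
  ext
  simp

lemma mem_AFP_and_eq_encode_of_mem_SMN (hM : M ∈ SMN (Gamma' (AP (hatP P)))) :
    GAtom.atm ⁻¹' M ∈ AFP P ∧ M = encode P (GAtom.atm ⁻¹' M) := by
  have mem_iff (x) : x ∈ M ↔ x ∈ TN (Gamma' (AP (hatP P))) M := by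
    rw [TN_eq_of_mem_SMN hM]
  set F := GAtom.atm ⁻¹' M
  have hfail : GAtom.fail ∉ M := fun h => (fail_mem_TN_Gamma'.1 ((mem_iff _).1 h)).1 h
  have hFV : F ⊆ SVar (AP (hatP P)) := fun a ha => (atm_mem_TN_Gamma'.1 ((mem_iff _).1 ha)).1
  -- a mismatch between `sa` and `a` would fire a `fail` rule
  have hsup : ∀ a ∈ SVar (AP (hatP P)), GAtom.sup a ∈ M ↔ a ∈ F := by
    intro a ha
    have h := mt (mem_iff _).2 hfail
    simp only [fail_mem_TN_Gamma', not_and, not_exists] at h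
    have := h hfail a ha
    tauto
  have hconseq : conseq (AP (hatP P)) F = F := by
    ext a
    rw [← sup_mem_TN_Gamma', ← mem_iff]
    exact ⟨fun h => (hsup a ((conseq_subset_SVar _ _) (sup_mem_TN_Gamma'.1 ((mem_iff _).1 h)))).1 h,
      fun h => (hsup a (hFV h)).2 h⟩
  refine ⟨mem_AFP_iff.2 ⟨hFV, hconseq⟩, ?_⟩
  ext x
  cases x with
  | atm a => simp [F]
  | prim a => rw [mem_iff, prim_mem_TN_Gamma']; simp [F]
  | sup a => rw [mem_iff, sup_mem_TN_Gamma', hconseq]; simp [F]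
  | fail => simp [hfail]
  | rho s => simpa using mt (mem_iff _).1 (rho_notMem_TN_Gamma' s)
  | g s k => simpa using mt (mem_iff _).1 (g_notMem_TN_Gamma' s k)

lemma TN_Gamma'_encode_subset (hF : F ∈ AFP P) :
    TN (Gamma' (AP (hatP P))) (encode P F) ⊆ encode P F := by
  obtain ⟨-, hconseq⟩ := mem_AFP_iff.1 hF
  intro x hx
  cases x with
  | atm a => have := atm_mem_TN_Gamma'.1 hx; simp at this ⊢; tauto
  | prim a => simpa using prim_mem_TN_Gamma'.1 hx
  | sup a => rw [sup_mem_TN_Gamma', preimage_atm_encode, hconseq] at hx; simpa using hx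
  | fail => simp [fail_mem_TN_Gamma'] at hx
  | rho s => exact absurd hx (rho_notMem_TN_Gamma' s)
  | g s k => exact absurd hx (g_notMem_TN_Gamma' s k)

lemma encode_subset_leastModel_GLReduct (hF : F ∈ AFP P) :
    encode P F ⊆ LeastModel (GLReduct (Gamma' (AP (hatP P))) (encode P F)) := by
  obtain ⟨hFV, hconseq⟩ := mem_AFP_iff.1 hF
  have hatm : ∀ a ∈ F, GAtom.atm a ∈ LeastModel (GLReduct (Gamma' (AP (hatP P))) (encode P F)) :=
    fun a ha => head_mem_leastModel_GLReduct (r := ⟨GAtom.atm a, [.neg (GAtom.prim a)]⟩)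
      (by rw [Gamma'_AP_hatP]; exact Or.inl (Or.inl ⟨a, hFV ha, Or.inl rfl⟩))
      (by simp [ha]) (by simp)
  rintro _ ((⟨a, ha, rfl⟩ | ⟨a, ⟨haV, haF⟩, rfl⟩) | ⟨a, ha, rfl⟩)
  · exact hatm a ha
  · exact head_mem_leastModel_GLReduct (r := ⟨GAtom.prim a, [.neg (GAtom.atm a)]⟩)
      (by rw [Gamma'_AP_hatP]; exact Or.inl (Or.inl ⟨a, haV, Or.inr rfl⟩))
      (by simp [haF]) (by simp)
  · rw [← hconseq] at ha
    obtain ⟨r, hr, rfl, hL⟩ := ha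
    obtain ⟨hpos, hneg⟩ := litsTrue_iff.1 hL
    refine head_mem_leastModel_GLReduct
      (r := ⟨GAtom.sup r.head, r.lits.map (Lit.map GAtom.atm)⟩)
      (by rw [Gamma'_AP_hatP]; exact Or.inl (Or.inr ⟨r, hr, rfl⟩)) (fun c hc => ?_) fun c hc => ?_
    · obtain ⟨b, hb, rfl⟩ := neg_mem_map_iff.1 hc
      simpa using hneg b hb
    · obtain ⟨b, hb, rfl⟩ := pos_mem_map_iff.1 hc
      exact hatm b (hpos b hb)

lemma SMN_Gamma'_AP_hatP (P : SProgram α n) :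
    SMN (Gamma' (AP (hatP P))) = encode P '' AFP P := by
  ext M
  constructor
  · intro hM
    obtain ⟨hF, hMF⟩ := mem_AFP_and_eq_encode_of_mem_SMN hM
    exact ⟨_, hF, hMF.symm⟩
  · rintro ⟨F, hF, rfl⟩
    exact mem_SMN_of_TN_subset (TN_Gamma'_encode_subset hF) (encode_subset_leastModel_GLReduct hF)

end StableModelsOfGamma'

end SOLP

open SOLP in
/-- `SM(P_u) = B` where `P_u = ∪_i Γ'(A(P̂_i))` (labelled w.r.t. `P_i`). -/
theorem sm_pu_eq_b {α : Type} {n : ℕ} (C : Fin n → SProgram α n) :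
    SMN (⋃ i, labProg i (Gamma' (AP (hatP (C i))))) =
      {X | ∃ F : Fin n → Set α, (∀ i, F i ∈ AFP (C i)) ∧
        X = ⋃ i, (((fun a => ((i : Fin n), GAtom.atm a)) '' F i) ∪
          (((fun t => ((i : Fin n), t)) '' encode (C i) (F i)) \
            ((fun a => ((i : Fin n), GAtom.atm a)) '' F i)))} := by
  have hB (i : Fin n) (F : Set α) :
      (fun a => (i, GAtom.atm a)) '' F ∪ ((fun t => (i, t)) '' encode (C i) F \
        (fun a => (i, GAtom.atm a)) '' F) = Prod.mk i '' encode (C i) F := by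
    refine Set.union_sdiff_cancel ?_
    rintro _ ⟨a, ha, rfl⟩
    exact ⟨_, image_atm_subset_encode ⟨a, ha, rfl⟩, rfl⟩
  ext M
  simp only [Set.mem_ofPred_eq, hB, mem_SMN_iUnion_labProg, SMN_Gamma'_AP_hatP]
  exact forall_preimage_prodMk_mem_image_iff _ _ M
end

section
/- The Social Semantics extends the Joint Fixpoint Semantics: for COLP programs P_1,...,P_n (n ≥ 1) and the SOLP collection {Q_1,...,Q_n} with Q_i = σ^n(P_i), SOS(Q_1,...,Q_n) = { ∪_{1≤i≤n} (F)_{Q_i} : F ∈ JFP(P_1,...,P_n) }. -/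
/-!
Every rule of `σ^n(P_j)` carries the social condition `[n-1,n-1] head`, which holds for `P_j`
exactly when the head holds for every other program. So in a social model an atom derived for
one program holds for all of them, and the model is `⋃ i, (F)_{Q_i}` for a single `F`. Once
the social conditions are discharged, `AT` of `σ^n(P)` is `T` of `P̂`, so the autonomous
fixpoints are the fixpoints of `P̂`, and `ST` at `⋃ i, (F)_{Q_i}` is `T_{P̂_i}(F)` on each label.
-/

namespace SOLP

section Labelled

variable {α : Type} {n : ℕ}

lemma mem_iUnion_labelled (F : Fin n → Set α) (j : Fin n) (a : α) :
    (j, a) ∈ ⋃ i, labelled i (F i) ↔ a ∈ F j := by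
  simp [labelled]

lemma Lit.trueFor_iUnion_labelled (F : Fin n → Set α) (j : Fin n) (b : Lit α) :
    b.trueFor (⋃ i, labelled i (F i)) j ↔ b.holds (F j) := by
  cases b <;> simp only [Lit.trueFor, Lit.holds, mem_iUnion_labelled]

end Labelled

section Hat

variable {α : Type} {n : ℕ}

lemma CRule.hatN_head (c : CRule α) : c.hatN.head = c.head := by
  unfold CRule.hatN; split <;> rfl

lemma CRule.litsTrue_hatN_body_iff (J : Set α) (c : CRule α) :
    litsTrue J c.hatN.body ↔ litsTrue J c.lits ∧ (c.isOkay = true → c.head ∈ J) := by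
  unfold CRule.hatN
  cases c.isOkay <;> simp [litsTrue, Lit.holds, and_comm]

lemma CRule.mem_vars_hatN_iff (c : CRule α) (a : α) :
    (c.hatN.head = a ∨ ∃ b ∈ c.hatN.body, b.atom = a) ↔
      c.head = a ∨ ∃ b ∈ c.lits, b.atom = a := by
  unfold CRule.hatN
  cases c.isOkay <;> simp [Lit.atom]

lemma mem_TN_hatC_iff (P : CProgram α) (J : Set α) (a : α) :
    a ∈ TN (hatC P) J ↔
      ∃ c ∈ P, c.head = a ∧ litsTrue J c.lits ∧ (c.isOkay = true → a ∈ J) := by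
  simp only [TN, hatC, Set.mem_ofPred_eq, Set.exists_mem_image, CRule.hatN_head]
  refine exists_congr fun c => and_congr_right fun _ => and_congr_right fun hhead => ?_
  subst hhead
  exact CRule.litsTrue_hatN_body_iff J c

lemma mem_ATP_sigmaP_iff (P : CProgram α) (J : Set α) (a : α) :
    a ∈ ATP (sigmaP n P) J ↔
      ∃ c ∈ P, c.head = a ∧ litsTrue J c.lits ∧ (c.isOkay = true → a ∈ J) := by
  simp only [ATP, AP, sigmaP, Set.image_image, Set.mem_union, Set.mem_ofPred_eq,
    Set.exists_mem_image, sigmaRule]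
  constructor
  · rintro (⟨c, hc, hok, hhead, hlits⟩ | ⟨c, hc, -, hhead, ha, hlits⟩)
    · exact ⟨c, hc, hhead, hlits, fun h => by simp_all⟩
    · exact ⟨c, hc, hhead, hlits, fun _ => ha⟩
  · rintro ⟨c, hc, hhead, hlits, hok⟩
    cases h : c.isOkay
    · exact .inl ⟨c, hc, h, hhead, hlits⟩
    · exact .inr ⟨c, hc, h, hhead, hok h, hlits⟩

lemma ATP_sigmaP (P : CProgram α) : ATP (sigmaP n P) = TN (hatC P) := by
  ext J a
  rw [mem_ATP_sigmaP_iff, mem_TN_hatC_iff]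

lemma SVar_AP_sigmaP (P : CProgram α) : SVar (AP (sigmaP n P)) = NVar (hatC P) := by
  ext a
  simp only [SVar, NVar, AP, sigmaP, hatC, Set.image_image, Set.mem_ofPred_eq,
    Set.exists_mem_image, CRule.mem_vars_hatN_iff, sigmaRule, List.not_mem_nil,
    false_and, exists_false, or_false]

lemma AFP_sigmaP (P : CProgram α) : AFP (sigmaP n P) = NFP (hatC P) := by
  simp only [AFP, NFP, SVar_AP_sigmaP, ATP_sigmaP]

end Hat

section Sigma

variable {α : Type} {n : ℕ}

/-- The only set of programs other than `P_j` with at least `n - 1` members is all of them. -/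
lemma SC.trueFor_card_pred_iff (I : SInterp α n) (j : Fin n) (L : List (Lit α)) :
    SC.TrueFor I j (.mk (.card (n - 1) (n - 1)) L []) ↔
      ∀ p ≠ j, ∀ b ∈ L, b.trueFor I p := by
  have hcard : (Finset.univ.erase j).card = n - 1 := by
    simp [Finset.card_erase_of_mem]
  constructor
  · rintro (_ | ⟨D, hD, hl, -, hc, -, -, -⟩) p hp b hb
    have hDsub : D ⊆ Finset.univ.erase j := fun q hq =>
      Finset.mem_erase.2 ⟨(hD q hq).2, Finset.mem_univ q⟩
    have hDeq : D = Finset.univ.erase j :=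
      Finset.eq_of_subset_of_card_le hDsub (hcard ▸ hl)
    exact hc b hb p (hDeq ▸ Finset.mem_erase.2 ⟨hp, Finset.mem_univ p⟩)
  · intro h
    refine .card (Finset.univ.erase j) (fun p hp => ⟨Set.mem_univ p, Finset.ne_of_mem_erase hp⟩)
      hcard.ge hcard.le (fun b hb p hp => h p (Finset.ne_of_mem_erase hp) b hb)
      (fun _ _ => ∅) (fun _ hs => absurd hs List.not_mem_nil)
      (fun _ hs => absurd hs List.not_mem_nil)

lemma bodyTrue_sigmaRule_iff (I : SInterp α n) (j : Fin n) (c : CRule α) :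
    (sigmaRule n c).bodyTrue I j ↔
      (∀ b ∈ c.lits, b.trueFor I j) ∧ ∀ p ≠ j, (p, c.head) ∈ I := by
  simp [SRule.bodyTrue, sigmaRule, SC.trueFor_card_pred_iff, Lit.trueFor]

lemma mem_STC_sigmaP_iff (P : Fin n → CProgram α) (I : SInterp α n) (j : Fin n) (a : α) :
    (j, a) ∈ STC (fun i => sigmaP n (P i)) I ↔
      ∃ c ∈ P j, c.head = a ∧ (sigmaRule n c).bodyTrue I j ∧ (c.isOkay = true → (j, a) ∈ I) := by
  simp only [STC, sigmaP, Set.mem_union, Set.mem_ofPred_eq, Set.exists_mem_image]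
  constructor
  · rintro (⟨c, hc, hok, hhead, hbody⟩ | ⟨c, hc, -, hhead, hI, hbody⟩)
    · exact ⟨c, hc, hhead, hbody, fun h => by simp_all [sigmaRule]⟩
    · exact ⟨c, hc, hhead, hbody, fun _ => hI⟩
  · rintro ⟨c, hc, hhead, hbody, hok⟩
    cases h : c.isOkay
    · exact .inl ⟨c, hc, h, hhead, hbody⟩
    · exact .inr ⟨c, hc, h, hhead, hok h, hbody⟩

lemma mem_of_STC_sigmaP_eq {P : Fin n → CProgram α} {I : SInterp α n}
    (hI : STC (fun i => sigmaP n (P i)) I = I) {j : Fin n} {a : α} (ha : (j, a) ∈ I)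
    (p : Fin n) : (p, a) ∈ I := by
  rcases eq_or_ne p j with rfl | hp
  · exact ha
  rw [← hI, mem_STC_sigmaP_iff] at ha
  obtain ⟨c, -, rfl, hbody, -⟩ := ha
  exact ((bodyTrue_sigmaRule_iff I j c).1 hbody).2 p hp

lemma bodyTrue_sigmaRule_iUnion_labelled_iff (F : Fin n → Set α) (j : Fin n) (c : CRule α) :
    (sigmaRule n c).bodyTrue (⋃ i, labelled i (F i)) j ↔
      litsTrue (F j) c.lits ∧ ∀ p ≠ j, c.head ∈ F p := by
  simp only [bodyTrue_sigmaRule_iff, Lit.trueFor_iUnion_labelled, mem_iUnion_labelled, litsTrue]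

lemma STC_sigmaP_iUnion_labelled_const {P : Fin n → CProgram α} {F : Set α}
    (hF : ∀ i, TN (hatC (P i)) F = F) :
    STC (fun i => sigmaP n (P i)) (⋃ i, labelled i F) = ⋃ i, labelled i F := by
  ext ⟨j, a⟩
  have hlab : (j, a) ∈ ⋃ i, labelled i F ↔ a ∈ F := mem_iUnion_labelled _ j a
  rw [mem_STC_sigmaP_iff, hlab]
  constructor
  · rintro ⟨c, hc, hhead, hbody, hok⟩
    rw [← hF j, mem_TN_hatC_iff]
    exact ⟨c, hc, hhead, ((bodyTrue_sigmaRule_iUnion_labelled_iff _ j c).1 hbody).1, hok⟩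
  · intro ha
    obtain ⟨c, hc, rfl, hlits, -⟩ := (mem_TN_hatC_iff (P j) F a).1 ((hF j).symm ▸ ha)
    exact ⟨c, hc, rfl, (bodyTrue_sigmaRule_iUnion_labelled_iff _ j c).2 ⟨hlits, fun _ _ => ha⟩,
      fun _ => ha⟩

end Sigma

end SOLP

open SOLP in
theorem sos_sigma_eq_jfp_general {α : Type} (n : ℕ) (P : Fin n → CProgram α) :
    SOS (fun i => sigmaP n (P i)) =
      {I | ∃ F ∈ JFP P, I = ⋃ i, labelled i F} := by
  ext I
  constructor
  · rintro ⟨⟨F, hF, rfl⟩, hfix⟩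
    have hsub (j p : Fin n) : F j ⊆ F p := fun a ha => (mem_iUnion_labelled F p a).1
      (mem_of_STC_sigmaP_eq hfix ((mem_iUnion_labelled F j a).2 ha) p)
    have hF_eq (i : Fin n) : F i = ⋃ k, F k :=
      (Set.subset_iUnion F i).antisymm (Set.iUnion_subset fun k => hsub k i)
    refine ⟨⋃ k, F k, Set.mem_iInter.2 fun i => ?_, Set.iUnion_congr fun i => by rw [← hF_eq i]⟩
    rw [← hF_eq i, ← AFP_sigmaP]
    exact hF i
  · rintro ⟨F, hF, rfl⟩
    have hF' := Set.mem_iInter.1 hF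
    exact ⟨⟨fun _ => F, fun i => AFP_sigmaP (P i) ▸ hF' i, rfl⟩,
      STC_sigmaP_iUnion_labelled_const fun i => (hF' i).2⟩

open SOLP in
/-- the Social Semantics extends the Joint Fixpoint Semantics. -/
theorem sos_sigma_eq_jfp {α : Type} (n : ℕ) (hn : 1 ≤ n) (P : Fin n → CProgram α) :
    SOS (fun i => sigmaP n (P i)) =
      {I | ∃ F ∈ JFP P, I = ⋃ i, labelled i F} :=
  sos_sigma_eq_jfp_general n P
end
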